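/- There exists an involution on the set of type B_n partitions without zero-block that interchanges the number of singleton pairs and the number of adjacency pairs, i.e., a map φ with φ∘φ = id, s_{φ(π)} = a_π and a_{φ(π)} = s_π for all π. -/

import Mathlib

/-- The ground set `{±1, …, ±n}` of type `B_n` partitions, as a finset of integers. -/
noncomputable def BGround (n : ℕ) : Finset ℤ := (Finset.Icc (-(n : ℤ)) n).erase 0

/-- `P` is a set partition of the finset `S`: blocks are nonempty subsets of `S`
and every element of `S` lies in a unique block. -/
def IsPartitionOf (P : Finset (Finset ℤ)) (S : Finset ℤ) : Prop :=
  (∀ B ∈ P, B.Nonempty) ∧ (∀ B ∈ P, B ⊆ S) ∧ (∀ x ∈ S, ∃! B, B ∈ P ∧ x ∈ B)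

/-- The negation `-B` of a block `B`. -/
def negBlock (B : Finset ℤ) : Finset ℤ := B.image (fun x => -x)

/-- `P` is a type `B_n` set partition without zero-block: a set partition of
`{±1, …, ±n}` such that the negation of every block is a block and no block is
self-negating. -/
def IsBPartNZ (n : ℕ) (P : Finset (Finset ℤ)) : Prop :=
  IsPartitionOf P (BGround n) ∧ (∀ B ∈ P, negBlock B ∈ P) ∧ ∀ B ∈ P, negBlock B ≠ B

/-- The number of singleton pairs `±i` of `P`, i.e. of `i ∈ [n]` with `{i}` a block. -/
noncomputable def spairs (n : ℕ) (P : Finset (Finset ℤ)) : ℕ :=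
  ((Finset.Icc (1 : ℤ) n).filter (fun i => {i} ∈ P)).card

/-- The cyclic successor of `j` in `{1, …, n}` (so `n` is followed by `1`). -/
def bnext (n : ℕ) (j : ℤ) : ℤ := if j = n then 1 else j + 1

/-- The number of adjacency pairs `±(j, j+1)` of `P`, i.e. of `j ∈ [n]` with `j` and
`j+1` (mod `n`) in a common block. -/
noncomputable def apairs (n : ℕ) (P : Finset (Finset ℤ)) : ℕ :=
  ((Finset.Icc (1 : ℤ) n).filter (fun j => ∃ B ∈ P, j ∈ B ∧ bnext n j ∈ B)).card


noncomputable section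
open scoped Classical
open Finset

lemma mem_BGround {n : ℕ} {x : ℤ} : x ∈ BGround n ↔ x ≠ 0 ∧ -(n:ℤ) ≤ x ∧ x ≤ n := by
  simp [BGround, and_comm]

lemma mem_BGround_of_Icc {n : ℕ} {x : ℤ} (h : x ∈ Finset.Icc (1:ℤ) n) : x ∈ BGround n := by
  simp only [Finset.mem_Icc] at h
  rw [mem_BGround]; constructor; omega; omega

lemma neg_mem_BGround {n : ℕ} {x : ℤ} (h : x ∈ BGround n) : -x ∈ BGround n := by
  rw [mem_BGround] at h ⊢; omega

lemma neg_mem_BGround_of_Icc {n : ℕ} {x : ℤ} (h : x ∈ Finset.Icc (1:ℤ) n) : -x ∈ BGround n :=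
  neg_mem_BGround (mem_BGround_of_Icc h)

lemma abs_mem_Icc_of_BGround {n : ℕ} {x : ℤ} (h : x ∈ BGround n) :
    (if 0 < x then x else -x) ∈ Finset.Icc (1:ℤ) n := by
  rw [mem_BGround] at h; rw [Finset.mem_Icc]; split <;> omega

/-- the same-block relation of a partition -/
def samblk (P : Finset (Finset ℤ)) (x y : ℤ) : Prop := ∃ B ∈ P, x ∈ B ∧ y ∈ B

namespace BPart

variable {n : ℕ} {P : Finset (Finset ℤ)}

lemma samblk_symm (h : samblk P x y) : samblk P y x := by
  obtain ⟨B, hB, hx, hy⟩ := h; exact ⟨B, hB, hy, hx⟩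

lemma samblk_mem_left (hP : IsBPartNZ n P) (h : samblk P x y) : x ∈ BGround n := by
  obtain ⟨B, hB, hx, _⟩ := h; exact hP.1.2.1 B hB hx

lemma samblk_mem_right (hP : IsBPartNZ n P) (h : samblk P x y) : y ∈ BGround n := by
  obtain ⟨B, hB, _, hy⟩ := h; exact hP.1.2.1 B hB hy

lemma samblk_refl (hP : IsBPartNZ n P) (hx : x ∈ BGround n) : samblk P x x := by
  obtain ⟨B, ⟨hB, hxB⟩, -⟩ := hP.1.2.2 x hx; exact ⟨B, hB, hxB, hxB⟩

lemma samblk_trans (hP : IsBPartNZ n P) (h1 : samblk P x y) (h2 : samblk P y z) :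
    samblk P x z := by
  obtain ⟨B, hB, hx, hy⟩ := h1
  obtain ⟨C, hC, hy', hz⟩ := h2
  obtain ⟨D, -, hD⟩ := hP.1.2.2 y (hP.1.2.1 B hB hy)
  have e1 := hD B ⟨hB, hy⟩
  have e2 := hD C ⟨hC, hy'⟩
  exact ⟨B, hB, hx, by rw [e1, ← e2]; exact hz⟩

lemma samblk_neg (hP : IsBPartNZ n P) (h : samblk P x y) : samblk P (-x) (-y) := by
  obtain ⟨B, hB, hx, hy⟩ := h
  refine ⟨negBlock B, hP.2.1 B hB, ?_, ?_⟩ <;> simp [negBlock] <;> assumption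

lemma not_samblk_neg_self (hP : IsBPartNZ n P) : ¬ samblk P x (-x) := by
  rintro ⟨B, hB, hx, hnx⟩
  have hxg := hP.1.2.1 B hB hx
  have hx0 : x ≠ 0 := (mem_BGround.1 hxg).1
  have hxB' : x ∈ negBlock B := by
    simp only [negBlock, Finset.mem_image]; exact ⟨-x, hnx, by ring⟩
  obtain ⟨D, -, hD⟩ := hP.1.2.2 x hxg
  have e1 := hD B ⟨hB, hx⟩
  have e2 := hD (negBlock B) ⟨hP.2.1 B hB, hxB'⟩
  exact hP.2.2 B hB (e2.trans e1.symm)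

lemma block_eq_classOf (hP : IsBPartNZ n P) (hB : B ∈ P) (hx : x ∈ B) :
    B = (BGround n).filter (fun y => samblk P x y) := by
  ext y
  simp only [Finset.mem_filter]
  constructor
  · intro hy
    exact ⟨hP.1.2.1 B hB hy, B, hB, hx, hy⟩
  · rintro ⟨-, C, hC, hxC, hyC⟩
    obtain ⟨D, -, hD⟩ := hP.1.2.2 x (hP.1.2.1 B hB hx)
    rw [hD B ⟨hB, hx⟩, ← hD C ⟨hC, hxC⟩]
    exact hyC

lemma part_ext (hP : IsBPartNZ n P) (hQ : IsBPartNZ n Q)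
    (h : ∀ x y, samblk P x y ↔ samblk Q x y) : P = Q := by
  have key : ∀ (P Q : Finset (Finset ℤ)), IsBPartNZ n P → IsBPartNZ n Q →
      (∀ x y, samblk P x y ↔ samblk Q x y) → P ⊆ Q := by
    intro P Q hP hQ h B hB
    obtain ⟨x, hx⟩ := hP.1.1 B hB
    have hxg := hP.1.2.1 B hB hx
    obtain ⟨C, ⟨hC, hxC⟩, -⟩ := hQ.1.2.2 x hxg
    have : B = C := by
      rw [block_eq_classOf hP hB hx, block_eq_classOf hQ hC hxC]
      ext y; simp only [Finset.mem_filter]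
      exact and_congr_right (fun _ => h x y)
    rwa [this]
  exact Finset.Subset.antisymm (key P Q hP hQ h) (key Q P hQ hP (fun x y => (h x y).symm))

lemma singleton_mem_iff (hP : IsBPartNZ n P) {i : ℤ} :
    {i} ∈ P ↔ i ∈ BGround n ∧ ∀ y, samblk P i y → y = i := by
  constructor
  · intro hi
    refine ⟨hP.1.2.1 _ hi (Finset.mem_singleton_self i), ?_⟩
    intro y hy
    obtain ⟨C, hC, hiC, hyC⟩ := hy
    obtain ⟨D, -, hD⟩ := hP.1.2.2 i (hP.1.2.1 _ hi (Finset.mem_singleton_self i))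
    have e1 := hD {i} ⟨hi, Finset.mem_singleton_self i⟩
    have e2 := hD C ⟨hC, hiC⟩
    rw [e2, ← e1] at hyC
    exact Finset.mem_singleton.1 hyC
  · rintro ⟨hig, h⟩
    obtain ⟨B, ⟨hB, hiB⟩, -⟩ := hP.1.2.2 i hig
    have : B = {i} := by
      rw [block_eq_classOf hP hB hiB]
      ext y
      simp only [Finset.mem_filter, Finset.mem_singleton]
      constructor
      · rintro ⟨-, hy⟩; exact h y hy
      · rintro rfl; exact ⟨hig, samblk_refl hP hig⟩
    rwa [this] at hB

end BPart

/-- partition from a relation -/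
def mkPart (n : ℕ) (r : ℤ → ℤ → Prop) : Finset (Finset ℤ) :=
  (BGround n).image (fun x => (BGround n).filter (r x))

structure GoodRel (n : ℕ) (r : ℤ → ℤ → Prop) : Prop where
  refl : ∀ x ∈ BGround n, r x x
  symm : ∀ {x y}, r x y → r y x
  trans : ∀ {x y z}, r x y → r y z → r x z
  mem : ∀ {x y}, r x y → x ∈ BGround n ∧ y ∈ BGround n
  neg : ∀ {x y}, r x y → r (-x) (-y)
  irr : ∀ x, ¬ r x (-x)

namespace GoodRel

variable {n : ℕ} {r : ℤ → ℤ → Prop} (hr : GoodRel n r)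

lemma class_eq (hr : GoodRel n r) (h : r x y) :
    (BGround n).filter (r x) = (BGround n).filter (r y) := by
  ext z
  simp only [Finset.mem_filter, and_congr_right_iff]
  exact fun _ => ⟨fun hxz => hr.trans (hr.symm h) hxz, fun hyz => hr.trans h hyz⟩

lemma mkPart_isB (hr : GoodRel n r) : IsBPartNZ n (mkPart n r) := by
  refine ⟨⟨?_, ?_, ?_⟩, ?_, ?_⟩
  · rintro B hB
    obtain ⟨x, hx, rfl⟩ := Finset.mem_image.1 hB
    exact ⟨x, Finset.mem_filter.2 ⟨hx, hr.refl x hx⟩⟩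
  · rintro B hB
    obtain ⟨x, hx, rfl⟩ := Finset.mem_image.1 hB
    exact Finset.filter_subset _ _
  · intro x hx
    refine ⟨(BGround n).filter (r x), ⟨Finset.mem_image_of_mem _ hx,
      Finset.mem_filter.2 ⟨hx, hr.refl x hx⟩⟩, ?_⟩
    rintro C ⟨hC, hxC⟩
    obtain ⟨y, hy, rfl⟩ := Finset.mem_image.1 hC
    exact hr.class_eq (Finset.mem_filter.1 hxC).2
  · rintro B hB
    obtain ⟨x, hx, rfl⟩ := Finset.mem_image.1 hB
    have : negBlock ((BGround n).filter (r x)) = (BGround n).filter (r (-x)) := by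
      ext z
      simp only [negBlock, Finset.mem_image, Finset.mem_filter]
      constructor
      · rintro ⟨w, ⟨hw1, hw2⟩, rfl⟩
        exact ⟨neg_mem_BGround hw1, hr.neg hw2⟩
      · rintro ⟨hz, hrz⟩
        exact ⟨-z, ⟨neg_mem_BGround hz, by simpa using hr.neg hrz⟩, by ring⟩
    rw [this]
    exact Finset.mem_image_of_mem _ (neg_mem_BGround hx)
  · rintro B hB h
    obtain ⟨x, hx, rfl⟩ := Finset.mem_image.1 hB
    have hmem : x ∈ (BGround n).filter (r x) := Finset.mem_filter.2 ⟨hx, hr.refl x hx⟩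
    rw [← h] at hmem
    simp only [negBlock, Finset.mem_image, Finset.mem_filter] at hmem
    obtain ⟨w, ⟨hw, hrw⟩, hwx⟩ := hmem
    have : w = -x := by omega
    subst this
    exact hr.irr x hrw

lemma mkPart_samblk (hr : GoodRel n r) : samblk (mkPart n r) x y ↔ r x y := by
  constructor
  · rintro ⟨B, hB, hx, hy⟩
    obtain ⟨z, hz, rfl⟩ := Finset.mem_image.1 hB
    exact hr.trans (hr.symm (Finset.mem_filter.1 hx).2) (Finset.mem_filter.1 hy).2
  · intro h
    have hx := (hr.mem h).1
    refine ⟨(BGround n).filter (r x), Finset.mem_image_of_mem _ hx,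
      Finset.mem_filter.2 ⟨hx, hr.refl x hx⟩, Finset.mem_filter.2 ⟨(hr.mem h).2, h⟩⟩

end GoodRel

def bprev (n : ℕ) (j : ℤ) : ℤ := if j = 1 then (n : ℤ) else j - 1

section Part2
open Finset

structure StepPair (n : ℕ) (step ostep : ℤ → ℤ) : Prop where
  mem : ∀ x ∈ Finset.Icc (1:ℤ) n, step x ∈ Finset.Icc (1:ℤ) n
  omem : ∀ x ∈ Finset.Icc (1:ℤ) n, ostep x ∈ Finset.Icc (1:ℤ) n
  inv : ∀ x ∈ Finset.Icc (1:ℤ) n, ostep (step x) = x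
  oinv : ∀ x ∈ Finset.Icc (1:ℤ) n, step (ostep x) = x
  cover : ∀ x ∈ Finset.Icc (1:ℤ) n, ∀ y ∈ Finset.Icc (1:ℤ) n, ∃ j ≤ n, step^[j] x = y

lemma bnext_mem {n : ℕ} {x : ℤ} (hx : x ∈ Finset.Icc (1:ℤ) n) :
    bnext n x ∈ Finset.Icc (1:ℤ) n := by
  simp only [Finset.mem_Icc] at *; unfold bnext; split <;> omega

lemma bprev_mem {n : ℕ} {x : ℤ} (hx : x ∈ Finset.Icc (1:ℤ) n) :
    bprev n x ∈ Finset.Icc (1:ℤ) n := by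
  simp only [Finset.mem_Icc] at *; unfold bprev; split <;> omega

lemma bprev_bnext {n : ℕ} {x : ℤ} (hx : x ∈ Finset.Icc (1:ℤ) n) : bprev n (bnext n x) = x := by
  simp only [Finset.mem_Icc] at hx; unfold bnext bprev; split_ifs <;> omega

lemma bnext_bprev {n : ℕ} {x : ℤ} (hx : x ∈ Finset.Icc (1:ℤ) n) : bnext n (bprev n x) = x := by
  simp only [Finset.mem_Icc] at hx; unfold bnext bprev; split_ifs <;> omega

lemma bnext_iter (n : ℕ) {x : ℤ} (hx : x ∈ Finset.Icc (1:ℤ) n) (j : ℕ) :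
    (bnext n)^[j] x = (x - 1 + j) % (n:ℤ) + 1 := by
  simp only [Finset.mem_Icc] at hx
  have hn : 0 < (n:ℤ) := by omega
  induction j with
  | zero => simp [Int.emod_eq_of_lt (by omega) (by omega : x - 1 < (n:ℤ))]
  | succ j ih =>
    rw [Function.iterate_succ_apply', ih]
    have h0 : (0:ℤ) ≤ (x - 1 + j) % n := Int.emod_nonneg _ (by omega)
    have h1 : (x - 1 + j) % n < n := Int.emod_lt_of_pos _ hn
    have key : (x - 1 + (j+1:ℕ)) % (n:ℤ) = ((x - 1 + j) % n + 1) % n := by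
      push_cast
      rw [show x - 1 + ((j:ℤ) + 1) = (x - 1 + j) + 1 by ring,
        Int.add_emod (x - 1 + j) 1, Int.add_emod ((x - 1 + (j:ℤ)) % n) 1,
        Int.emod_emod_of_dvd _ dvd_rfl]
    rw [key]
    unfold bnext
    split_ifs with h
    · have : (x - 1 + j) % n + 1 = n := by omega
      rw [this, Int.emod_self]; norm_num
    · have : ((x - 1 + j) % n + 1) % n = (x - 1 + j) % n + 1 := by
        apply Int.emod_eq_of_lt (by omega)
        rcases lt_or_eq_of_le (by omega : (x - 1 + j) % n + 1 ≤ n) with h' | h'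
        · exact h'
        · exact absurd (by omega) h
      omega

lemma bnext_cover {n : ℕ} {x y : ℤ} (hx : x ∈ Finset.Icc (1:ℤ) n)
    (hy : y ∈ Finset.Icc (1:ℤ) n) : ∃ j ≤ n, (bnext n)^[j] x = y := by
  have hx' := hx
  simp only [Finset.mem_Icc] at hx' hy
  have hn : 0 < (n:ℤ) := by omega
  refine ⟨((y - x) % n).toNat, ?_, ?_⟩
  · have h1 := Int.emod_lt_of_pos (y - x) hn
    have h2 := Int.emod_nonneg (y - x) (show (n:ℤ) ≠ 0 by omega)
    have h3 := Int.toNat_of_nonneg h2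
    omega
  · rw [bnext_iter n hx]
    have h0 : (0:ℤ) ≤ (y - x) % n := Int.emod_nonneg _ (by omega)
    rw [Int.toNat_of_nonneg h0]
    have : (x - 1 + (y - x) % n) % n = (x - 1 + (y - x)) % n := by
      rw [Int.add_emod, Int.emod_emod_of_dvd _ dvd_rfl, ← Int.add_emod]
    rw [this, show x - 1 + (y - x) = y - 1 by ring,
      Int.emod_eq_of_lt (by omega) (by omega)]
    omega

lemma iter_mem {n : ℕ} {step : ℤ → ℤ} (hstep : ∀ x ∈ Finset.Icc (1:ℤ) n, step x ∈ Finset.Icc (1:ℤ) n)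
    {x : ℤ} (hx : x ∈ Finset.Icc (1:ℤ) n) (j : ℕ) : step^[j] x ∈ Finset.Icc (1:ℤ) n := by
  induction j generalizing x with
  | zero => exact hx
  | succ j ih => rw [Function.iterate_succ_apply]; exact ih (hstep x hx)

lemma iter_inv {n : ℕ} {step ostep : ℤ → ℤ}
    (hstep : ∀ x ∈ Finset.Icc (1:ℤ) n, step x ∈ Finset.Icc (1:ℤ) n)
    (hinv : ∀ x ∈ Finset.Icc (1:ℤ) n, ostep (step x) = x)
    {x : ℤ} (hx : x ∈ Finset.Icc (1:ℤ) n) (j : ℕ) : ostep^[j] (step^[j] x) = x := by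
  induction j generalizing x with
  | zero => rfl
  | succ j ih =>
    have h1 : step^[j+1] x = step^[j] (step x) := Function.iterate_succ_apply step j x
    have h2 : ostep^[j+1] (step^[j] (step x)) = ostep (ostep^[j] (step^[j] (step x))) :=
      Function.iterate_succ_apply' ostep j _
    rw [h1, h2, ih (hstep x hx), hinv x hx]

lemma stepPair_bnext (n : ℕ) : StepPair n (bnext n) (bprev n) :=
  ⟨fun _ h => bnext_mem h, fun _ h => bprev_mem h, fun _ h => bprev_bnext h,
   fun _ h => bnext_bprev h, fun _ hx _ hy => bnext_cover hx hy⟩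

lemma stepPair_bprev (n : ℕ) : StepPair n (bprev n) (bnext n) := by
  refine ⟨fun _ h => bprev_mem h, fun _ h => bnext_mem h, fun _ h => bnext_bprev h,
   fun _ h => bprev_bnext h, fun x hx y hy => ?_⟩
  obtain ⟨j, hj, hje⟩ := bnext_cover hy hx
  exact ⟨j, hj, by rw [← hje]; exact iter_inv (fun _ h => bnext_mem h) (fun _ h => bprev_bnext h) hy j⟩

/-- walk through G via step, with fuel -/
def walk (step : ℤ → ℤ) (G : Finset ℤ) : ℕ → ℤ → ℤ
  | 0, x => x
  | k+1, x => if x ∈ G then walk step G k (step x) else x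

lemma walk_mem {n : ℕ} {step : ℤ → ℤ} {G : Finset ℤ}
    (hstep : ∀ x ∈ Finset.Icc (1:ℤ) n, step x ∈ Finset.Icc (1:ℤ) n)
    {x : ℤ} (hx : x ∈ Finset.Icc (1:ℤ) n) (k : ℕ) : walk step G k x ∈ Finset.Icc (1:ℤ) n := by
  induction k generalizing x with
  | zero => exact hx
  | succ k ih =>
    rw [walk]; split
    · exact ih (hstep x hx)
    · exact hx

lemma walk_of_notin {step : ℤ → ℤ} {G : Finset ℤ} {x : ℤ} (hx : x ∉ G) (k : ℕ) :
    walk step G k x = x := by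
  cases k with
  | zero => rfl
  | succ k => rw [walk, if_neg hx]

lemma walk_in {step : ℤ → ℤ} {G : Finset ℤ} {x : ℤ} {k : ℕ}
    (h : walk step G k x ∈ G) : ∀ j ≤ k, step^[j] x ∈ G := by
  induction k generalizing x with
  | zero => intro j hj; interval_cases j; exact h
  | succ k ih =>
    by_cases hx : x ∈ G
    · rw [walk, if_pos hx] at h
      intro j hj
      cases j with
      | zero => exact hx
      | succ j => rw [Function.iterate_succ_apply]; exact ih h j (by omega)
    · rw [walk_of_notin hx] at h; exact absurd h hx

lemma walk_notin {n : ℕ} {step ostep : ℤ → ℤ} (hs : StepPair n step ostep) {G : Finset ℤ}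
    (hG : G ⊆ Finset.Icc (1:ℤ) n) (hGne : G ≠ Finset.Icc (1:ℤ) n)
    {x : ℤ} (hx : x ∈ Finset.Icc (1:ℤ) n) : walk step G n x ∉ G := by
  intro h
  apply hGne
  apply Finset.Subset.antisymm hG
  intro y hy
  obtain ⟨j, hj, rfl⟩ := hs.cover x hx y hy
  exact walk_in h j hj

lemma walk_stable {step : ℤ → ℤ} {G : Finset ℤ} {x : ℤ} {k : ℕ}
    (h : walk step G k x ∉ G) : walk step G (k+1) x = walk step G k x := by
  induction k generalizing x with
  | zero => exact walk_of_notin h 1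
  | succ k ih =>
    by_cases hx : x ∈ G
    · rw [walk, if_pos hx] at h
      conv_lhs => rw [walk, if_pos hx]
      conv_rhs => rw [walk, if_pos hx]
      exact ih h
    · rw [walk_of_notin hx, walk_of_notin hx]

lemma walk_glue {n : ℕ} {step ostep : ℤ → ℤ} (hs : StepPair n step ostep) {G : Finset ℤ}
    (hG : G ⊆ Finset.Icc (1:ℤ) n) (hGne : G ≠ Finset.Icc (1:ℤ) n)
    {x : ℤ} (hx : x ∈ G) : walk step G n (step x) = walk step G n x := by
  have hxI : x ∈ Finset.Icc (1:ℤ) n := hG hx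
  have hn : n ≠ 0 := by
    intro h; subst h; simp at hxI
  obtain ⟨m, rfl⟩ : ∃ m, n = m + 1 := ⟨n - 1, by omega⟩
  have e1 : walk step G (m+1) x = walk step G m (step x) := by rw [walk, if_pos hx]
  have e2 : walk step G m (step x) ∉ G := by
    rw [← e1]; exact walk_notin hs hG hGne hxI
  rw [walk_stable e2, ← e1]

lemma walk_reach {step : ℤ → ℤ} {G : Finset ℤ} {x : ℤ} (hx : x ∈ G) (k : ℕ) :
    walk step G k x = x ∨ ∃ w ∈ G, walk step G k x = step w := by
  induction k generalizing x with
  | zero => exact Or.inl rfl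
  | succ k ih =>
    rw [walk, if_pos hx]
    by_cases hsx : step x ∈ G
    · rcases ih hsx with h | h
      · exact Or.inr ⟨x, hx, h⟩
      · exact Or.inr h
    · rw [walk_of_notin hsx]
      exact Or.inr ⟨x, hx, rfl⟩

end Part2

section Part3
open Finset BPart

lemma StepPair.symm {n : ℕ} {step ostep : ℤ → ℤ} (hs : StepPair n step ostep) :
    StepPair n ostep step := by
  refine ⟨hs.omem, hs.mem, hs.oinv, hs.inv, fun x hx y hy => ?_⟩
  obtain ⟨j, hj, hje⟩ := hs.cover y hy x hx
  exact ⟨j, hj, by rw [← hje]; exact iter_inv hs.mem hs.inv hy j⟩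

lemma StepPair.fix {n : ℕ} {step ostep : ℤ → ℤ} (hs : StepPair n step ostep)
    {x : ℤ} (hx : x ∈ Finset.Icc (1:ℤ) n) (hfix : step x = x)
    {y : ℤ} (hy : y ∈ Finset.Icc (1:ℤ) n) : y = x := by
  obtain ⟨j, -, rfl⟩ := hs.cover x hx y hy
  clear hy
  induction j with
  | zero => rfl
  | succ j ih => rw [Function.iterate_succ_apply, hfix]; exact ih

def inD (D : Finset ℤ) (x : ℤ) : Prop := x ∈ D ∨ -x ∈ D

lemma inD_neg {D : Finset ℤ} {x : ℤ} : inD D (-x) ↔ inD D x := by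
  unfold inD; rw [neg_neg]; tauto

lemma not_inD_of_Icc {n : ℕ} {D : Finset ℤ} (hD : D ⊆ Finset.Icc (1:ℤ) n) {x : ℤ}
    (hx : x ∈ Finset.Icc (1:ℤ) n) (h : x ∉ D) : ¬ inD D x := by
  rintro (h1 | h2)
  · exact h h1
  · have := hD h2; simp only [Finset.mem_Icc] at this hx; omega

def anc (n : ℕ) (step : ℤ → ℤ) (G : Finset ℤ) (x : ℤ) : ℤ :=
  if 0 < x then walk step G n x else -(walk step G n (-x))

lemma anc_of_pos {n : ℕ} {step : ℤ → ℤ} {G : Finset ℤ} {x : ℤ} (hx : 0 < x) :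
    anc n step G x = walk step G n x := if_pos hx

lemma anc_neg {n : ℕ} {step : ℤ → ℤ} {G : Finset ℤ} {x : ℤ} (hx : x ≠ 0) :
    anc n step G (-x) = - anc n step G x := by
  unfold anc
  rcases lt_or_gt_of_ne hx with h | h
  · rw [if_pos (by omega : (0:ℤ) < -x), if_neg (by omega : ¬ (0:ℤ) < x), neg_neg]
  · rw [if_neg (by omega : ¬ (0:ℤ) < -x), if_pos h, neg_neg]

/-- the new relation after surgery: detach `±D`, glue each `g ∈ G` to the class of `step g`. -/
def TRel (n : ℕ) (step : ℤ → ℤ) (G D : Finset ℤ) (P : Finset (Finset ℤ)) (x y : ℤ) : Prop :=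
  x ∈ BGround n ∧ y ∈ BGround n ∧
    (x = y ∨ (¬ inD D x ∧ ¬ inD D y ∧
      (if G = Finset.Icc (1:ℤ) n then (0 < x ↔ 0 < y)
       else samblk P (anc n step G x) (anc n step G y))))

def Tmap (n : ℕ) (step : ℤ → ℤ) (G D : Finset ℤ) (P : Finset (Finset ℤ)) :
    Finset (Finset ℤ) :=
  mkPart n (TRel n step G D P)

/-- hypotheses for the surgery -/
structure TCtx (n : ℕ) (step ostep : ℤ → ℤ) (G D : Finset ℤ) (P : Finset (Finset ℤ)) :
    Prop where
  hs : StepPair n step ostep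
  hG : G ⊆ Finset.Icc (1:ℤ) n
  hD : D ⊆ Finset.Icc (1:ℤ) n
  hP : IsBPartNZ n P
  hsing : ∀ g ∈ G, ({g} : Finset ℤ) ∈ P
  hadj : ∀ d ∈ D, samblk P (ostep d) d

namespace TCtx

variable {n : ℕ} {step ostep : ℤ → ℤ} {G D : Finset ℤ} {P : Finset (Finset ℤ)}

/-- an element that is both a glued singleton and whose class is glued-to is degenerate -/
lemma step_eq_of_GD (c : TCtx n step ostep G D P) {d : ℤ} (hdD : d ∈ D)
    (hdG : ostep d ∈ G) : ostep d = d := by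
  have h1 := c.hsing _ hdG
  have h2 := c.hadj d hdD
  exact ((BPart.singleton_mem_iff c.hP).1 h1 |>.2 d h2).symm

lemma not_mem_D (c : TCtx n step ostep G D P) (hGne : G ≠ Finset.Icc (1:ℤ) n)
    {g : ℤ} (hg : g ∈ G) : g ∉ D := by
  intro hgD
  have h2 := c.hadj g hgD
  have := (BPart.singleton_mem_iff c.hP).1 (c.hsing g hg) |>.2 (ostep g) (samblk_symm h2)
  -- ostep g = g
  have hgI : g ∈ Finset.Icc (1:ℤ) n := c.hG hg
  have hfix : step g = g := by
    conv_lhs => rw [← this]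
    exact c.hs.oinv g hgI
  apply hGne
  apply Finset.Subset.antisymm c.hG
  intro y hy
  rw [c.hs.fix hgI hfix hy]; exact hg

lemma ostep_not_mem_G (c : TCtx n step ostep G D P) (hGne : G ≠ Finset.Icc (1:ℤ) n)
    {d : ℤ} (hd : d ∈ D) : ostep d ∉ G := by
  intro hdG
  have heq := c.step_eq_of_GD hd hdG
  have hdI : d ∈ Finset.Icc (1:ℤ) n := c.hD hd
  have hfix : step d = d := by conv_lhs => rw [← heq]; exact c.hs.oinv d hdI
  apply hGne
  apply Finset.Subset.antisymm c.hG
  intro y hy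
  rw [c.hs.fix hdI hfix hy]
  rw [← heq]; exact hdG

lemma walk_notin_D (c : TCtx n step ostep G D P) (hGne : G ≠ Finset.Icc (1:ℤ) n)
    {x : ℤ} (hx : x ∈ Finset.Icc (1:ℤ) n) (hxD : x ∈ G ∨ x ∉ D) :
    walk step G n x ∉ D := by
  intro hw
  by_cases hxG : x ∈ G
  · rcases walk_reach hxG n with h | ⟨w, hwG, h⟩
    · rw [h] at hw
      exact c.not_mem_D hGne hxG hw
    · rw [h] at hw
      have := c.ostep_not_mem_G hGne hw
      rw [c.hs.inv w (c.hG hwG)] at this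
      exact this hwG
  · rw [walk_of_notin hxG] at hw
    rcases hxD with h | h
    · exact hxG h
    · exact h hw

/-- chain lemma: walking through D via ostep stays in the same block -/
lemma chainD (c : TCtx n step ostep G D P) (k : ℕ) {x : ℤ}
    (hx : x ∈ Finset.Icc (1:ℤ) n) : samblk P x (walk ostep D k x) := by
  induction k generalizing x with
  | zero => exact samblk_refl c.hP (mem_BGround_of_Icc hx)
  | succ k ih =>
    rw [walk]
    split
    · next hxD =>
      exact samblk_trans c.hP (samblk_symm (c.hadj x hxD)) (ih (c.hs.omem x hx))
    · exact samblk_refl c.hP (mem_BGround_of_Icc hx)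

lemma chain_iter (c : TCtx n step ostep G D P) (hDI : D = Finset.Icc (1:ℤ) n) (j : ℕ)
    {x : ℤ} (hx : x ∈ Finset.Icc (1:ℤ) n) : samblk P x (ostep^[j] x) := by
  induction j with
  | zero => exact samblk_refl c.hP (mem_BGround_of_Icc hx)
  | succ j ih =>
    have hmem : ostep^[j] x ∈ Finset.Icc (1:ℤ) n := iter_mem c.hs.omem hx j
    have : samblk P (ostep (ostep^[j] x)) (ostep^[j] x) := c.hadj _ (by rw [hDI]; exact hmem)
    rw [Function.iterate_succ_apply']
    exact samblk_trans c.hP ih (samblk_symm this)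

/-- when D is everything, P is the full sign partition -/
lemma full_of_DIcc (c : TCtx n step ostep G D P) (hDI : D = Finset.Icc (1:ℤ) n) :
    ∀ x y, samblk P x y ↔ (x ∈ BGround n ∧ y ∈ BGround n ∧ (0 < x ↔ 0 < y)) := by
  have pos : ∀ x y : ℤ, x ∈ Finset.Icc (1:ℤ) n → y ∈ Finset.Icc (1:ℤ) n → samblk P x y := by
    intro x y hx hy
    obtain ⟨j, -, rfl⟩ := (c.hs.symm).cover x hx y hy
    exact c.chain_iter hDI j hx
  intro x y
  constructor
  · intro h
    have hx := samblk_mem_left c.hP h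
    have hy := samblk_mem_right c.hP h
    refine ⟨hx, hy, ?_⟩
    rw [mem_BGround] at hx hy
    constructor
    · intro h0
      by_contra hy0
      have hyI : -y ∈ Finset.Icc (1:ℤ) n := by rw [Finset.mem_Icc]; omega
      have hxI : x ∈ Finset.Icc (1:ℤ) n := by rw [Finset.mem_Icc]; omega
      have h2 : samblk P (-y) x := pos _ _ hyI hxI
      exact not_samblk_neg_self c.hP
        (samblk_symm (samblk_trans c.hP h2 h))
    · intro h0
      by_contra hx0
      have hyI : y ∈ Finset.Icc (1:ℤ) n := by rw [Finset.mem_Icc]; omega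
      have hxI : -x ∈ Finset.Icc (1:ℤ) n := by rw [Finset.mem_Icc]; omega
      have h2 : samblk P y (-x) := pos _ _ hyI hxI
      exact not_samblk_neg_self c.hP (samblk_trans c.hP h h2)
  · rintro ⟨hx, hy, hsign⟩
    rw [mem_BGround] at hx hy
    by_cases h0 : 0 < x
    · have h0y : 0 < y := hsign.1 h0
      exact pos x y (by rw [Finset.mem_Icc]; omega) (by rw [Finset.mem_Icc]; omega)
    · have h0y : ¬ 0 < y := fun hc => h0 (hsign.2 hc)
      have := pos (-x) (-y) (by rw [Finset.mem_Icc]; omega) (by rw [Finset.mem_Icc]; omega)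
      have := samblk_neg c.hP this
      simpa using this

/-- when G is everything, P is the all-singleton partition -/
lemma allsing_of_GIcc (c : TCtx n step ostep G D P) (hGI : G = Finset.Icc (1:ℤ) n) :
    ∀ x y, samblk P x y ↔ (x ∈ BGround n ∧ x = y) := by
  have hsing : ∀ x, x ∈ BGround n → ({x} : Finset ℤ) ∈ P := by
    intro x hx
    rw [mem_BGround] at hx
    by_cases h0 : 0 < x
    · exact c.hsing x (by rw [hGI, Finset.mem_Icc]; omega)
    · have : ({-x} : Finset ℤ) ∈ P := c.hsing (-x) (by rw [hGI, Finset.mem_Icc]; omega)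
      have h2 := c.hP.2.1 _ this
      have : negBlock {-x} = {x} := by simp [negBlock]
      rwa [this] at h2
  intro x y
  constructor
  · intro h
    have hx := samblk_mem_left c.hP h
    refine ⟨hx, ?_⟩
    exact ((BPart.singleton_mem_iff c.hP).1 (hsing x hx)).2 y h |>.symm
  · rintro ⟨hx, rfl⟩
    exact samblk_refl c.hP hx

end TCtx
end Part3

section Part4
open Finset BPart

namespace TCtx

variable {n : ℕ} {step ostep : ℤ → ℤ} {G D : Finset ℤ} {P : Finset (Finset ℤ)}

lemma inD_Icc_of_ground {n : ℕ} {x : ℤ} (hx : x ∈ BGround n) :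
    inD (Finset.Icc (1:ℤ) n) x := by
  rw [mem_BGround] at hx
  unfold inD
  simp only [Finset.mem_Icc]
  omega

lemma good (c : TCtx n step ostep G D P) : GoodRel n (TRel n step G D P) := by
  constructor
  · intro x hx; exact ⟨hx, hx, Or.inl rfl⟩
  · rintro x y ⟨hx, hy, h | ⟨h1, h2, h3⟩⟩
    · exact ⟨hy, hx, Or.inl h.symm⟩
    · refine ⟨hy, hx, Or.inr ⟨h2, h1, ?_⟩⟩
      split_ifs at h3 ⊢ with hGI
      · exact h3.symm
      · exact samblk_symm h3
  · rintro x y z ⟨hx, hy, h⟩ ⟨-, hz, h'⟩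
    refine ⟨hx, hz, ?_⟩
    rcases h with rfl | ⟨h1, h2, h3⟩
    · exact h'
    · rcases h' with rfl | ⟨h1', h2', h3'⟩
      · exact Or.inr ⟨h1, h2, h3⟩
      · refine Or.inr ⟨h1, h2', ?_⟩
        split_ifs at h3 h3' ⊢ with hGI
        · exact h3.trans h3'
        · exact samblk_trans c.hP h3 h3'
  · rintro x y ⟨hx, hy, -⟩; exact ⟨hx, hy⟩
  · rintro x y ⟨hx, hy, h⟩
    have hx0 : x ≠ 0 := (mem_BGround.1 hx).1
    have hy0 : y ≠ 0 := (mem_BGround.1 hy).1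
    refine ⟨neg_mem_BGround hx, neg_mem_BGround hy, ?_⟩
    rcases h with rfl | ⟨h1, h2, h3⟩
    · exact Or.inl rfl
    · refine Or.inr ⟨fun hc => h1 (inD_neg.1 hc), fun hc => h2 (inD_neg.1 hc), ?_⟩
      split_ifs at h3 ⊢ with hGI
      · constructor <;> intro <;> omega
      · rw [anc_neg hx0, anc_neg hy0]
        exact samblk_neg c.hP h3
  · rintro x ⟨hx, -, h⟩
    have hx0 : x ≠ 0 := (mem_BGround.1 hx).1
    rcases h with h | ⟨-, -, h3⟩
    · omega
    · split_ifs at h3 with hGI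
      · omega
      · rw [anc_neg hx0] at h3
        exact not_samblk_neg_self c.hP h3

lemma isB (c : TCtx n step ostep G D P) : IsBPartNZ n (Tmap n step G D P) :=
  c.good.mkPart_isB

lemma samblk_T (c : TCtx n step ostep G D P) {x y : ℤ} :
    samblk (Tmap n step G D P) x y ↔ TRel n step G D P x y :=
  c.good.mkPart_samblk

lemma sing_det (c : TCtx n step ostep G D P) {d : ℤ} (hd : d ∈ D) :
    ({d} : Finset ℤ) ∈ Tmap n step G D P := by
  rw [BPart.singleton_mem_iff c.isB]
  refine ⟨mem_BGround_of_Icc (c.hD hd), ?_⟩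
  intro y h
  rw [c.samblk_T] at h
  obtain ⟨-, -, h | ⟨h1, -, -⟩⟩ := h
  · exact h.symm
  · exact absurd (Or.inl hd) h1

lemma adj_glue (c : TCtx n step ostep G D P) {g : ℤ} (hg : g ∈ G) :
    samblk (Tmap n step G D P) g (step g) := by
  have hgI : g ∈ Finset.Icc (1:ℤ) n := c.hG hg
  have hsgI : step g ∈ Finset.Icc (1:ℤ) n := c.hs.mem g hgI
  rw [c.samblk_T]
  refine ⟨mem_BGround_of_Icc hgI, mem_BGround_of_Icc hsgI, ?_⟩
  by_cases hfix : step g = g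
  · exact Or.inl hfix.symm
  refine Or.inr ⟨?_, ?_, ?_⟩
  · refine not_inD_of_Icc c.hD hgI ?_
    intro hgD
    apply hfix
    have h1 : ostep g = g :=
      ((BPart.singleton_mem_iff c.hP).1 (c.hsing g hg)).2 (ostep g)
        (samblk_symm (c.hadj g hgD))
    conv_lhs => rw [← h1]
    exact c.hs.oinv g hgI
  · refine not_inD_of_Icc c.hD hsgI ?_
    intro hsD
    apply hfix
    have h2 := c.hadj (step g) hsD
    rw [c.hs.inv g hgI] at h2
    exact ((BPart.singleton_mem_iff c.hP).1 (c.hsing g hg)).2 (step g) h2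
  · split_ifs with hGI
    · simp only [Finset.mem_Icc] at hgI hsgI
      constructor <;> intro <;> omega
    · rw [anc_of_pos (by simp only [Finset.mem_Icc] at hgI; omega),
        anc_of_pos (by simp only [Finset.mem_Icc] at hsgI; omega),
        walk_glue c.hs c.hG hGI hg]
      exact samblk_refl c.hP (mem_BGround_of_Icc (walk_mem c.hs.mem hgI n))

/-- a same-block partner of a glued element is itself -/
lemma sing_char (c : TCtx n step ostep G D P) {x y : ℤ} (h : samblk P x y)
    (hin : inD G x) : y = x := by
  rcases hin with h1 | h1
  · exact ((BPart.singleton_mem_iff c.hP).1 (c.hsing x h1)).2 y h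
  · have h2 : ({x} : Finset ℤ) ∈ P := by
      have h3 := c.hP.2.1 _ (c.hsing _ h1)
      have h4 : negBlock {-x} = ({x} : Finset ℤ) := by simp [negBlock]
      rwa [h4] at h3
    exact ((BPart.singleton_mem_iff c.hP).1 h2).2 y h

theorem comp (c : TCtx n step ostep G D P) :
    Tmap n ostep D G (Tmap n step G D P) = P := by
  have c' : TCtx n ostep step D G (Tmap n step G D P) :=
    ⟨c.hs.symm, c.hD, c.hG, c.isB, fun d hd => c.sing_det hd,
     fun g hg => samblk_symm (c.adj_glue hg)⟩
  apply BPart.part_ext c'.isB c.hP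
  intro x y
  rw [c'.samblk_T]
  by_cases hGI : G = Finset.Icc (1:ℤ) n
  · -- P is the all-singleton partition, outer relation detaches everything
    have hall := c.allsing_of_GIcc hGI
    constructor
    · rintro ⟨hx, hy, h | ⟨hnx, -, -⟩⟩
      · exact (hall x y).2 ⟨hx, h⟩
      · exact absurd (hGI ▸ inD_Icc_of_ground hx) hnx
    · intro h
      obtain ⟨hx, rfl⟩ := (hall x y).1 h
      exact ⟨hx, hx, Or.inl rfl⟩
  by_cases hDI : D = Finset.Icc (1:ℤ) n
  · -- P is the full sign partition; G must be empty
    have hfull := c.full_of_DIcc hDI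
    have hGe : ∀ u, u ∉ G := by
      intro u hu
      obtain ⟨w, hw, hwG⟩ := Finset.exists_of_ssubset (lt_of_le_of_ne c.hG hGI)
      have huI : u ∈ Finset.Icc (1:ℤ) n := c.hG hu
      have hne : w ≠ u := fun h => hwG (h ▸ hu)
      have : samblk P u w := by
        refine (hfull u w).2 ⟨mem_BGround_of_Icc huI, mem_BGround_of_Icc hw, ?_⟩
        simp only [Finset.mem_Icc] at huI hw
        constructor <;> intro <;> omega
      exact hne (c.sing_char this (Or.inl hu))
    constructor
    · rintro ⟨hx, hy, h | ⟨-, -, hsign⟩⟩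
      · subst h; exact samblk_refl c.hP hx
      · rw [if_pos hDI] at hsign
        exact (hfull x y).2 ⟨hx, hy, hsign⟩
    · intro h
      obtain ⟨hx, hy, hsign⟩ := (hfull x y).1 h
      refine ⟨hx, hy, Or.inr ⟨?_, ?_, ?_⟩⟩
      · rintro (h1 | h1) <;> exact hGe _ h1
      · rintro (h1 | h1) <;> exact hGe _ h1
      · rw [if_pos hDI]; exact hsign
  -- main case
  have key : ∀ u, u ∈ Finset.Icc (1:ℤ) n → u ∉ G →
      samblk P u (walk ostep D n u) ∧ walk ostep D n u ∈ Finset.Icc (1:ℤ) n ∧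
      walk ostep D n u ∉ D ∧ walk ostep D n u ∉ G := by
    intro u hu huG
    refine ⟨c.chainD n hu, walk_mem c.hs.omem hu n, walk_notin c.hs.symm c.hD hDI hu, ?_⟩
    by_cases huD : u ∈ D
    · rcases walk_reach huD n with h | ⟨w, hwD, h⟩
      · rw [h]; exact huG
      · rw [h]; exact c.ostep_not_mem_G hGI hwD
    · rw [walk_of_notin huD]; exact huG
  have keyS : ∀ x, x ∈ BGround n → ¬ inD G x →
      samblk P x (anc n ostep D x) ∧ ¬ inD D (anc n ostep D x) ∧
      anc n step G (anc n ostep D x) = anc n ostep D x ∧ anc n ostep D x ∈ BGround n := by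
    intro x hx hnG
    by_cases h0 : 0 < x
    · have hu : x ∈ Finset.Icc (1:ℤ) n := by
        rw [mem_BGround] at hx; rw [Finset.mem_Icc]; omega
      obtain ⟨k1, k2, k3, k4⟩ := key x hu (fun h => hnG (Or.inl h))
      rw [anc_of_pos h0]
      have hz0 : (0:ℤ) < walk ostep D n x := by
        simp only [Finset.mem_Icc] at k2; omega
      refine ⟨k1, not_inD_of_Icc c.hD k2 k3, ?_, mem_BGround_of_Icc k2⟩
      rw [anc_of_pos hz0, walk_of_notin k4]
    · have hx0 : x ≠ 0 := (mem_BGround.1 hx).1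
      have hu : -x ∈ Finset.Icc (1:ℤ) n := by
        rw [mem_BGround] at hx; rw [Finset.mem_Icc]; omega
      obtain ⟨k1, k2, k3, k4⟩ := key (-x) hu (fun h => hnG (Or.inr h))
      have hz0 : (0:ℤ) < walk ostep D n (-x) := by
        simp only [Finset.mem_Icc] at k2; omega
      have hanc : anc n ostep D x = -(walk ostep D n (-x)) := by
        unfold anc; rw [if_neg h0]
      rw [hanc]
      refine ⟨?_, ?_, ?_, neg_mem_BGround (mem_BGround_of_Icc k2)⟩
      · have := samblk_neg c.hP k1
        rwa [neg_neg] at this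
      · rw [inD_neg]; exact not_inD_of_Icc c.hD k2 k3
      · rw [anc_neg (by omega : walk ostep D n (-x) ≠ 0),
          anc_of_pos hz0, walk_of_notin k4]
  constructor
  · rintro ⟨hx, hy, hxy | ⟨hnx, hny, hrel⟩⟩
    · subst hxy; exact samblk_refl c.hP hx
    · rw [if_neg hDI] at hrel
      obtain ⟨kx1, kx2, kx4, kx5⟩ := keyS x hx hnx
      obtain ⟨ky1, ky2, ky4, ky5⟩ := keyS y hy hny
      rw [c.samblk_T] at hrel
      obtain ⟨-, -, he | ⟨-, -, hrel2⟩⟩ := hrel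
      · exact samblk_trans c.hP kx1 (he ▸ samblk_symm ky1)
      · rw [if_neg hGI, kx4, ky4] at hrel2
        exact samblk_trans c.hP kx1 (samblk_trans c.hP hrel2 (samblk_symm ky1))
  · intro h
    have hx := samblk_mem_left c.hP h
    have hy := samblk_mem_right c.hP h
    by_cases hnx : inD G x
    · have := c.sing_char h hnx
      exact ⟨hx, hy, Or.inl this.symm⟩
    by_cases hny : inD G y
    · have := c.sing_char (samblk_symm h) hny
      exact ⟨hx, hy, Or.inl this⟩
    refine ⟨hx, hy, Or.inr ⟨hnx, hny, ?_⟩⟩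
    rw [if_neg hDI]
    obtain ⟨kx1, kx2, kx4, kx5⟩ := keyS x hx hnx
    obtain ⟨ky1, ky2, ky4, ky5⟩ := keyS y hy hny
    rw [c.samblk_T]
    refine ⟨kx5, ky5, Or.inr ⟨kx2, ky2, ?_⟩⟩
    rw [if_neg hGI, kx4, ky4]
    exact samblk_trans c.hP (samblk_symm kx1) (samblk_trans c.hP h ky1)

end TCtx
end Part4

section Part5
open Finset BPart

def SingSet (n : ℕ) (P : Finset (Finset ℤ)) : Finset ℤ :=
  (Finset.Icc (1 : ℤ) n).filter (fun i => {i} ∈ P)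

def AdjSet (n : ℕ) (P : Finset (Finset ℤ)) : Finset ℤ :=
  (Finset.Icc (1 : ℤ) n).filter (fun j => ∃ B ∈ P, j ∈ B ∧ bnext n j ∈ B)

lemma spairs_eq (n : ℕ) (P : Finset (Finset ℤ)) : spairs n P = (SingSet n P).card := rfl
lemma apairs_eq (n : ℕ) (P : Finset (Finset ℤ)) : apairs n P = (AdjSet n P).card := rfl

lemma Icc_int_card (n : ℕ) : (Finset.Icc (1 : ℤ) n).card = n := by
  rw [Int.card_Icc]; simp

lemma spairs_le (n : ℕ) (P : Finset (Finset ℤ)) : spairs n P ≤ n := by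
  have h := Finset.card_le_card
    (Finset.filter_subset (fun i => ({i} : Finset ℤ) ∈ P) (Finset.Icc (1:ℤ) n))
  rw [Icc_int_card] at h
  exact h

lemma apairs_le (n : ℕ) (P : Finset (Finset ℤ)) : apairs n P ≤ n := by
  have h := Finset.card_le_card
    (Finset.filter_subset (fun j => ∃ B ∈ P, j ∈ B ∧ bnext n j ∈ B) (Finset.Icc (1:ℤ) n))
  rw [Icc_int_card] at h
  exact h

lemma bnext_injOn {n : ℕ} {x y : ℤ} (hx : x ∈ Finset.Icc (1:ℤ) n)
    (hy : y ∈ Finset.Icc (1:ℤ) n) (h : bnext n x = bnext n y) : x = y := by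
  simp only [Finset.mem_Icc] at hx hy
  unfold bnext at h
  split_ifs at h <;> omega

noncomputable instance BPartFintype (n : ℕ) : Fintype {P : Finset (Finset ℤ) // IsBPartNZ n P} := by
  apply Fintype.subtype ((BGround n).powerset.powerset.filter (IsBPartNZ n))
  intro P
  simp only [Finset.mem_filter, Finset.mem_powerset, and_iff_right_iff_imp]
  intro h
  intro B hB
  rw [Finset.mem_powerset]
  exact h.1.2.1 B hB

variable {n : ℕ}

end Part5

section Part5b
open Finset BPart

variable {n : ℕ}

lemma ctx_forward {S A : Finset ℤ} {Q : Finset (Finset ℤ)} (hP : IsBPartNZ n Q)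
    (hS : S ⊆ SingSet n Q) (hA : A ⊆ AdjSet n Q) :
    TCtx n (bnext n) (bprev n) S (A.image (bnext n)) Q := by
  refine ⟨stepPair_bnext n, ?_, ?_, hP, ?_, ?_⟩
  · exact fun x hx => (Finset.mem_filter.1 (hS hx)).1
  · intro x hx
    obtain ⟨j, hj, rfl⟩ := Finset.mem_image.1 hx
    exact bnext_mem (Finset.mem_filter.1 (hA hj)).1
  · exact fun g hg => (Finset.mem_filter.1 (hS hg)).2
  · intro d hd
    obtain ⟨j, hj, rfl⟩ := Finset.mem_image.1 hd
    rw [bprev_bnext (Finset.mem_filter.1 (hA hj)).1]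
    exact (Finset.mem_filter.1 (hA hj)).2

lemma ctx_backward {S A : Finset ℤ} {Q : Finset (Finset ℤ)} (hP : IsBPartNZ n Q)
    (hS : S ⊆ SingSet n Q) (hA : A ⊆ AdjSet n Q) :
    TCtx n (bprev n) (bnext n) S A Q := by
  refine ⟨stepPair_bprev n, ?_, ?_, hP, ?_, ?_⟩
  · exact fun x hx => (Finset.mem_filter.1 (hS hx)).1
  · exact fun x hx => (Finset.mem_filter.1 (hA hx)).1
  · exact fun g hg => (Finset.mem_filter.1 (hS hg)).2
  · exact fun d hd => samblk_symm (Finset.mem_filter.1 (hA hd)).2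

lemma image_pb {A : Finset ℤ} (hA : ∀ a ∈ A, a ∈ Finset.Icc (1:ℤ) n) :
    (A.image (bnext n)).image (bprev n) = A := by
  ext z
  simp only [Finset.mem_image]
  constructor
  · rintro ⟨w, ⟨a, ha, rfl⟩, rfl⟩
    rwa [bprev_bnext (hA a ha)]
  · intro hz
    exact ⟨bnext n z, ⟨z, hz, rfl⟩, bprev_bnext (hA z hz)⟩

lemma image_bp {A : Finset ℤ} (hA : ∀ a ∈ A, a ∈ Finset.Icc (1:ℤ) n) :
    (A.image (bprev n)).image (bnext n) = A := by
  ext z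
  simp only [Finset.mem_image]
  constructor
  · rintro ⟨w, ⟨a, ha, rfl⟩, rfl⟩
    rwa [bnext_bprev (hA a ha)]
  · intro hz
    exact ⟨bprev n z, ⟨z, hz, rfl⟩, bnext_bprev (hA z hz)⟩

/-- the finset of all type-B partitions without zero block -/
noncomputable def allP (n : ℕ) : Finset (Finset (Finset ℤ)) :=
  ((BGround n).powerset.powerset).filter (IsBPartNZ n)

lemma mem_allP {Q : Finset (Finset ℤ)} : Q ∈ allP n ↔ IsBPartNZ n Q := by
  unfold allP
  simp only [Finset.mem_filter, Finset.mem_powerset, and_iff_right_iff_imp]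
  intro h B hB
  rw [Finset.mem_powerset]
  exact h.1.2.1 B hB

/-- triples: a partition with a marked set of p singletons and q adjacencies -/
noncomputable def Tri (n p q : ℕ) :
    Finset (Σ _ : Finset (Finset ℤ), Finset ℤ × Finset ℤ) :=
  (allP n).sigma (fun Q => (SingSet n Q).powersetCard p ×ˢ (AdjSet n Q).powersetCard q)

lemma sigma_ext' {α : Type*} {β : Type*} {a a' : α} {b b' : β} (h : a = a') (h2 : b = b') :
    (⟨a, b⟩ : Σ _ : α, β) = ⟨a', b'⟩ := by subst h; subst h2; rfl

lemma mem_Tri {p q : ℕ} {t : Σ _ : Finset (Finset ℤ), Finset ℤ × Finset ℤ} :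
    t ∈ Tri n p q ↔ IsBPartNZ n t.1 ∧ (t.2.1 ⊆ SingSet n t.1 ∧ t.2.1.card = p) ∧
      (t.2.2 ⊆ AdjSet n t.1 ∧ t.2.2.card = q) := by
  obtain ⟨Q, S, A⟩ := t
  rw [Tri, Finset.mem_sigma, Finset.mem_product, Finset.mem_powersetCard,
    Finset.mem_powersetCard, mem_allP]

lemma Tri_card_sym (n p q : ℕ) : (Tri n p q).card = (Tri n q p).card := by
  apply Finset.card_bij'
    (i := fun t _ => (⟨Tmap n (bnext n) t.2.1 (t.2.2.image (bnext n)) t.1,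
        (t.2.2.image (bnext n), t.2.1)⟩ :
        Σ _ : Finset (Finset ℤ), Finset ℤ × Finset ℤ))
    (j := fun t _ => (⟨Tmap n (bprev n) t.2.1 t.2.2 t.1,
        (t.2.2, t.2.1.image (bprev n))⟩ :
        Σ _ : Finset (Finset ℤ), Finset ℤ × Finset ℤ))
  · -- i maps into Tri n q p
    intro t ht
    obtain ⟨hQ, ⟨hS, hScard⟩, ⟨hA, hAcard⟩⟩ := mem_Tri.1 ht
    have c := ctx_forward hQ hS hA
    rw [mem_Tri]
    refine ⟨c.isB, ⟨?_, ?_⟩, ⟨?_, ?_⟩⟩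
    · intro d hd
      rw [SingSet, Finset.mem_filter]
      refine ⟨?_, c.sing_det hd⟩
      obtain ⟨j, hj, rfl⟩ := Finset.mem_image.1 hd
      exact bnext_mem (Finset.mem_filter.1 (hA hj)).1
    · rw [Finset.card_image_of_injOn, hAcard]
      intro x hx y hy h
      exact bnext_injOn (Finset.mem_filter.1 (hA hx)).1 (Finset.mem_filter.1 (hA hy)).1 h
    · intro g hg
      rw [AdjSet, Finset.mem_filter]
      exact ⟨(Finset.mem_filter.1 (hS hg)).1, c.adj_glue hg⟩
    · exact hScard
  · -- j maps into Tri n p q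
    intro t ht
    obtain ⟨hQ, ⟨hS, hScard⟩, ⟨hA, hAcard⟩⟩ := mem_Tri.1 ht
    have c := ctx_backward hQ hS hA
    rw [mem_Tri]
    refine ⟨c.isB, ⟨?_, ?_⟩, ⟨?_, ?_⟩⟩
    · intro d hd
      rw [SingSet, Finset.mem_filter]
      exact ⟨(Finset.mem_filter.1 (hA hd)).1, c.sing_det hd⟩
    · exact hAcard
    · intro j hj
      obtain ⟨g, hg, rfl⟩ := Finset.mem_image.1 hj
      have hgI := (Finset.mem_filter.1 (hS hg)).1
      rw [AdjSet, Finset.mem_filter]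
      refine ⟨bprev_mem hgI, ?_⟩
      rw [bnext_bprev hgI]
      exact samblk_symm (c.adj_glue hg)
    · rw [Finset.card_image_of_injOn, hScard]
      intro x hx y hy h
      have hxI := (Finset.mem_filter.1 (hS hx)).1
      have hyI := (Finset.mem_filter.1 (hS hy)).1
      rw [← bnext_bprev hxI, h, bnext_bprev hyI]
  · -- left inverse
    intro t ht
    obtain ⟨hQ, ⟨hS, hScard⟩, ⟨hA, hAcard⟩⟩ := mem_Tri.1 ht
    have c := ctx_forward hQ hS hA
    apply sigma_ext'
    · exact c.comp
    · apply Prod.ext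
      · rfl
      · exact image_pb (fun a ha => (Finset.mem_filter.1 (hA ha)).1)
  · -- right inverse
    intro t ht
    obtain ⟨hQ, ⟨hS, hScard⟩, ⟨hA, hAcard⟩⟩ := mem_Tri.1 ht
    have c := ctx_backward hQ hS hA
    apply sigma_ext'
    · show Tmap n (bnext n) t.2.2 ((t.2.1.image (bprev n)).image (bnext n))
          (Tmap n (bprev n) t.2.1 t.2.2 t.1) = t.1
      rw [image_bp (fun a ha => (Finset.mem_filter.1 (hS ha)).1)]
      exact c.comp
    · apply Prod.ext
      · exact image_bp (fun a ha => (Finset.mem_filter.1 (hS ha)).1)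
      · rfl
end Part5b

section Part6
open Finset

noncomputable def Fib (n : ℕ) (c : ℕ × ℕ) : ℕ :=
  ((allP n).filter (fun Q => (spairs n Q, apairs n Q) = c)).card

lemma Tri_card_eq_sum (n p q : ℕ) :
    (Tri n p q).card = ∑ Q ∈ allP n, (spairs n Q).choose p * (apairs n Q).choose q := by
  rw [Tri, Finset.card_sigma]
  apply Finset.sum_congr rfl
  intro Q _
  rw [Finset.card_product, Finset.card_powersetCard, Finset.card_powersetCard,
    spairs_eq, apairs_eq]

lemma Hexpand (n p q : ℕ) :
    ∑ Q ∈ allP n, (spairs n Q).choose p * (apairs n Q).choose q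
      = ∑ c ∈ Finset.range (n+1) ×ˢ Finset.range (n+1),
          (Fib n c) * (c.1.choose p * c.2.choose q) := by
  rw [← Finset.sum_fiberwise_of_maps_to (g := fun Q => (spairs n Q, apairs n Q))
      (t := Finset.range (n+1) ×ˢ Finset.range (n+1))
      (fun Q _ => by
        rw [Finset.mem_product, Finset.mem_range, Finset.mem_range]
        exact ⟨Nat.lt_succ_of_le (spairs_le n Q), Nat.lt_succ_of_le (apairs_le n Q)⟩)
      (fun Q => (spairs n Q).choose p * (apairs n Q).choose q)]
  apply Finset.sum_congr rfl
  intro c _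
  have hcongr : ∀ Q ∈ (allP n).filter (fun Q => (spairs n Q, apairs n Q) = c),
      (spairs n Q).choose p * (apairs n Q).choose q = c.1.choose p * c.2.choose q := by
    intro Q hQ
    have h := (Finset.mem_filter.1 hQ).2
    rw [← h]
  rw [Finset.sum_congr rfl hcongr, Finset.sum_const, smul_eq_mul]
  rfl

lemma Fib_zero_left (n : ℕ) {p : ℕ} (q : ℕ) (hp : n < p) : Fib n (p, q) = 0 := by
  rw [Fib, Finset.card_eq_zero, Finset.filter_eq_empty_iff]
  intro Q _
  rw [Prod.mk.injEq, not_and]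
  intro h
  have := spairs_le n Q
  omega

lemma Fib_zero_right (n : ℕ) (p : ℕ) {q : ℕ} (hq : n < q) : Fib n (p, q) = 0 := by
  rw [Fib, Finset.card_eq_zero, Finset.filter_eq_empty_iff]
  intro Q _
  rw [Prod.mk.injEq, not_and]
  intro _ h
  have := apairs_le n Q
  omega

lemma Fib_sym (n p q : ℕ) : Fib n (p, q) = Fib n (q, p) := by
  have Hsym : ∀ p q : ℕ,
      (∑ c ∈ Finset.range (n+1) ×ˢ Finset.range (n+1),
        ((Fib n c : ℤ) - Fib n (c.2, c.1)) * ((c.1.choose p * c.2.choose q : ℕ) : ℤ)) = 0 := by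
    intro p q
    have h1 := Tri_card_sym n p q
    rw [Tri_card_eq_sum, Tri_card_eq_sum, Hexpand, Hexpand] at h1
    have h2 : ∑ c ∈ Finset.range (n+1) ×ˢ Finset.range (n+1),
          (Fib n (c.2, c.1)) * (c.1.choose p * c.2.choose q)
        = ∑ c ∈ Finset.range (n+1) ×ˢ Finset.range (n+1),
          (Fib n c) * (c.1.choose q * c.2.choose p) := by
      apply Finset.sum_equiv (Equiv.prodComm ℕ ℕ)
      · intro c
        simp only [Finset.mem_product, Equiv.prodComm_apply, Prod.fst_swap, Prod.snd_swap]
        tauto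
      · intro c _
        show Fib n (c.2, c.1) * (c.1.choose p * c.2.choose q)
          = Fib n c.swap * (c.swap.1.choose q * c.swap.2.choose p)
        rw [show c.swap = (c.2, c.1) from rfl]
        ring
    have hnat : (∑ c ∈ Finset.range (n+1) ×ˢ Finset.range (n+1),
          Fib n c * (c.1.choose p * c.2.choose q))
        = ∑ c ∈ Finset.range (n+1) ×ˢ Finset.range (n+1),
          Fib n (c.2, c.1) * (c.1.choose p * c.2.choose q) := h1.trans h2.symm
    calc (∑ c ∈ Finset.range (n+1) ×ˢ Finset.range (n+1),
        ((Fib n c : ℤ) - Fib n (c.2, c.1)) * ((c.1.choose p * c.2.choose q : ℕ) : ℤ))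
        = (∑ c ∈ Finset.range (n+1) ×ˢ Finset.range (n+1),
            (Fib n c : ℤ) * ((c.1.choose p * c.2.choose q : ℕ) : ℤ))
          - ∑ c ∈ Finset.range (n+1) ×ˢ Finset.range (n+1),
            (Fib n (c.2, c.1) : ℤ) * ((c.1.choose p * c.2.choose q : ℕ) : ℤ) := by
          rw [← Finset.sum_sub_distrib]
          apply Finset.sum_congr rfl
          intro c _
          ring
      _ = 0 := by
          rw [sub_eq_zero]
          exact_mod_cast congrArg (fun m : ℕ => (m : ℤ)) hnat
  have main : ∀ t p q : ℕ, 2*n ≤ p + q + t → Fib n (p, q) = Fib n (q, p) := by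
    intro t
    induction t using Nat.strong_induction_on with
    | _ t ih =>
      intro p q hpq
      by_cases hrange : p ≤ n ∧ q ≤ n
      · have hmem : (p, q) ∈ Finset.range (n+1) ×ˢ Finset.range (n+1) := by
          rw [Finset.mem_product, Finset.mem_range, Finset.mem_range]
          omega
        have hterm : ∀ c ∈ Finset.range (n+1) ×ˢ Finset.range (n+1), c ≠ (p, q) →
            ((Fib n c : ℤ) - Fib n (c.2, c.1)) * ((c.1.choose p * c.2.choose q : ℕ) : ℤ) = 0 := by
          rintro ⟨c1, c2⟩ hc hne
          rw [Finset.mem_product, Finset.mem_range, Finset.mem_range] at hc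
          by_cases hge : p ≤ c1 ∧ q ≤ c2
          · have hsum : p + q < c1 + c2 := by
              rcases Decidable.em (c1 = p) with h | h
              · rcases Decidable.em (c2 = q) with h' | h'
                · exact absurd (by rw [h, h']) hne
                · omega
              · omega
            have heq := ih (2*n - (c1 + c2)) (by omega) c1 c2 (by omega)
            rw [heq]
            simp
          · rw [not_and_or] at hge
            rcases hge with h | h
            · rw [Nat.choose_eq_zero_of_lt (by omega)]
              simp
            · rw [Nat.choose_eq_zero_of_lt (by omega : c2 < q)]
              simp
        have hsingle := Finset.sum_eq_single_of_mem (p, q) hmem hterm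
        rw [Hsym p q] at hsingle
        simp only [Nat.choose_self, one_mul, mul_one, Nat.cast_one] at hsingle
        have : ((Fib n (p, q) : ℤ)) = Fib n (q, p) := by
          have := hsingle.symm
          omega
        exact_mod_cast this
      · rw [not_and_or] at hrange
        rcases hrange with h | h
        · rw [Fib_zero_left n q (by omega), Fib_zero_right n q (by omega)]
        · rw [Fib_zero_right n p (by omega), Fib_zero_left n p (by omega)]
  exact main (2*n) p q (by omega)
end Part6

section Part7
open Finset

noncomputable def mkInvol {X : Type*} (s a : X → ℕ)
    (ch : ∀ p q : ℕ, {x : X // s x = p ∧ a x = q} ≃ {x : X // s x = q ∧ a x = p}) :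
    X → X := fun x =>
  if h1 : s x < a x then (ch (s x) (a x) ⟨x, rfl, rfl⟩).1
  else if h2 : a x < s x then ((ch (a x) (s x)).symm ⟨x, rfl, rfl⟩).1
  else x

lemma mkInvol_lt {X : Type*} (s a : X → ℕ)
    (ch : ∀ p q : ℕ, {x : X // s x = p ∧ a x = q} ≃ {x : X // s x = q ∧ a x = p})
    {p q : ℕ} (hlt : p < q) (x : X) (hx : s x = p ∧ a x = q) :
    mkInvol s a ch x = (ch p q ⟨x, hx⟩).1 := by
  have h1 := hx.1
  have h2 := hx.2
  subst h1; subst h2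
  unfold mkInvol
  rw [dif_pos hlt]

lemma mkInvol_gt {X : Type*} (s a : X → ℕ)
    (ch : ∀ p q : ℕ, {x : X // s x = p ∧ a x = q} ≃ {x : X // s x = q ∧ a x = p})
    {p q : ℕ} (hlt : p < q) (x : X) (hx : s x = q ∧ a x = p) :
    mkInvol s a ch x = ((ch p q).symm ⟨x, hx⟩).1 := by
  have h1 := hx.1
  have h2 := hx.2
  subst h1; subst h2
  unfold mkInvol
  rw [dif_neg (by omega), dif_pos hlt]

lemma mkInvol_eq {X : Type*} (s a : X → ℕ)
    (ch : ∀ p q : ℕ, {x : X // s x = p ∧ a x = q} ≃ {x : X // s x = q ∧ a x = p})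
    (x : X) (heq : s x = a x) : mkInvol s a ch x = x := by
  unfold mkInvol
  rw [dif_neg (by omega), dif_neg (by omega)]

lemma exists_involution_abstract {X : Type*} [Fintype X] (s a : X → ℕ)
    (h : ∀ p q : ℕ, ((Finset.univ : Finset X).filter (fun x => s x = p ∧ a x = q)).card
      = ((Finset.univ : Finset X).filter (fun x => s x = q ∧ a x = p)).card) :
    ∃ φ : X → X, ∀ x, φ (φ x) = x ∧ s (φ x) = a x ∧ a (φ x) = s x := by
  classical
  have hcard : ∀ p q : ℕ, Fintype.card {x : X // s x = p ∧ a x = q}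
      = Fintype.card {x : X // s x = q ∧ a x = p} := by
    intro p q
    rw [Fintype.card_subtype, Fintype.card_subtype]
    exact h p q
  have ch : ∀ p q : ℕ, {x : X // s x = p ∧ a x = q} ≃ {x : X // s x = q ∧ a x = p} :=
    fun p q => Fintype.equivOfCardEq (hcard p q)
  refine ⟨mkInvol s a ch, fun x => ?_⟩
  rcases lt_trichotomy (s x) (a x) with hlt | heq | hgt
  · have e1 : mkInvol s a ch x = (ch (s x) (a x) ⟨x, rfl, rfl⟩).1 :=
      mkInvol_lt s a ch hlt x ⟨rfl, rfl⟩
    have hyprop := (ch (s x) (a x) ⟨x, rfl, rfl⟩).2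
    have e2 : mkInvol s a ch (ch (s x) (a x) ⟨x, rfl, rfl⟩).1
        = ((ch (s x) (a x)).symm ⟨(ch (s x) (a x) ⟨x, rfl, rfl⟩).1, hyprop⟩).1 :=
      mkInvol_gt s a ch hlt _ hyprop
    refine ⟨?_, by rw [e1]; exact hyprop.1, by rw [e1]; exact hyprop.2⟩
    rw [e1, e2]
    have e3 : (⟨(ch (s x) (a x) ⟨x, rfl, rfl⟩).1, hyprop⟩ :
        {z : X // s z = a x ∧ a z = s x}) = ch (s x) (a x) ⟨x, rfl, rfl⟩ :=
      Subtype.ext rfl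
    rw [e3, Equiv.symm_apply_apply]
  · have e1 := mkInvol_eq s a ch x heq
    rw [e1, e1]
    exact ⟨rfl, heq, heq.symm⟩
  · have e1 : mkInvol s a ch x = ((ch (a x) (s x)).symm ⟨x, rfl, rfl⟩).1 :=
      mkInvol_gt s a ch hgt x ⟨rfl, rfl⟩
    have hyprop := ((ch (a x) (s x)).symm ⟨x, rfl, rfl⟩).2
    have e2 : mkInvol s a ch ((ch (a x) (s x)).symm ⟨x, rfl, rfl⟩).1
        = (ch (a x) (s x) ⟨((ch (a x) (s x)).symm ⟨x, rfl, rfl⟩).1, hyprop⟩).1 :=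
      mkInvol_lt s a ch hgt _ hyprop
    refine ⟨?_, by rw [e1]; exact hyprop.1, by rw [e1]; exact hyprop.2⟩
    rw [e1, e2]
    have e3 : (⟨((ch (a x) (s x)).symm ⟨x, rfl, rfl⟩).1, hyprop⟩ :
        {z : X // s z = a x ∧ a z = s x}) = (ch (a x) (s x)).symm ⟨x, rfl, rfl⟩ :=
      Subtype.ext rfl
    rw [e3, Equiv.apply_symm_apply]

lemma fib_bridge (n p q : ℕ) :
    ((Finset.univ : Finset {P : Finset (Finset ℤ) // IsBPartNZ n P}).filter
      (fun π => spairs n π.1 = p ∧ apairs n π.1 = q)).card = Fib n (p, q) := by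
  rw [Fib]
  have hflt : (allP n).filter (fun Q => (spairs n Q, apairs n Q) = (p, q))
      = (allP n).filter (fun Q => spairs n Q = p ∧ apairs n Q = q) := by
    apply Finset.filter_congr
    intro Q _
    rw [Prod.mk.injEq]
  rw [hflt]
  apply Finset.card_bij (i := fun π _ => π.1)
  · intro π hπ
    rw [Finset.mem_filter]
    exact ⟨mem_allP.2 π.2, (Finset.mem_filter.1 hπ).2⟩
  · intro a ha b hb hab
    exact Subtype.ext hab
  · intro Q hQ
    exact ⟨⟨Q, mem_allP.1 (Finset.mem_filter.1 hQ).1⟩,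
      Finset.mem_filter.2 ⟨Finset.mem_univ _, (Finset.mem_filter.1 hQ).2⟩, rfl⟩

end Part7


/-- There is an involution on type `B_n` partitions without zero-block interchanging
the number of singleton pairs and the number of adjacency pairs. -/
theorem typeB_exists_involution (n : ℕ) :
    ∃ φ : {P : Finset (Finset ℤ) // IsBPartNZ n P} → {P : Finset (Finset ℤ) // IsBPartNZ n P},
      ∀ P, φ (φ P) = P ∧ spairs n (φ P).1 = apairs n P.1 ∧
        apairs n (φ P).1 = spairs n P.1 := by
  exact exists_involution_abstract
    (fun π : {P : Finset (Finset ℤ) // IsBPartNZ n P} => spairs n π.1)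
    (fun π : {P : Finset (Finset ℤ) // IsBPartNZ n P} => apairs n π.1)
    (fun p q => by rw [fib_bridge n p q, fib_bridge n q p, Fib_sym])
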